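/- The interval [-0.55, 1] is contained in the closure of {Re s : G_4(s) = 0}, where G_4(s) = 1 + 2^s + 3^s + 4^s. -/

import Mathlib

/-!
Fix `σ` and put `a = 2 ^ σ`, `c = 3 ^ σ`. Suppose `A, B ∈ ℂ` satisfy `‖A‖ = a`, `‖B‖ = c` and
`1 + A + B + A ^ 2 = 0`. Since `log 3 / log 2` is irrational, Kronecker's theorem gives `t` with
`2 ^ (σ + t i) = A` exactly and `3 ^ (σ + t i)` arbitrarily close to `B`. Then
`z ↦ G₄ (σ + t i + z)` is a uniformly small perturbation, near `0`, of the entire function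
`F z = 1 + A 2 ^ z + B 3 ^ z + A ^ 2 4 ^ z`, which has an isolated zero at `0`; by the minimum
modulus principle (Hurwitz's argument) the perturbation vanishes near `0`, so `σ ∈ R₄`.

Such `A, B` exist as soon as `‖1 + A + A ^ 2‖ = c` for some `A` on the circle `‖A‖ = a`. On that
circle `‖1 + A + A ^ 2‖` takes every value between `√3 / 2 · |a ^ 2 - 1|` and `1 + a + a ^ 2`
(when `1 + a ^ 2 ≤ 4 a`), and `3 (4 ^ σ - 1) ^ 2 ≤ 4 · 9 ^ σ` on `[-0.55, 1]` because
`(4 ^ σ - 1) / 3 ^ σ = (4 / 3) ^ σ - (1 / 3) ^ σ` is increasing in `σ`.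
-/

open Complex Metric Filter Topology Real

theorem Differentiable.eventually_ne_zero_nhdsNE {f : ℂ → ℂ} (hf : Differentiable ℂ f) {w : ℂ}
    (hw : f w ≠ 0) (c : ℂ) : ∀ᶠ z in 𝓝[≠] c, f z ≠ 0 := by
  rw [← not_frequently]
  intro h
  have hf' := analyticOnNhd_univ_iff_differentiable.2 hf
  exact hw (hf'.eqOn_zero_of_preconnected_of_frequently_eq_zero isPreconnected_univ
    (Set.mem_univ c) h (Set.mem_univ w))

theorem Differentiable.exists_eq_zero_of_norm_lt_sphere {g : ℂ → ℂ} (hg : Differentiable ℂ g)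
    {c : ℂ} {r : ℝ} (hr : 0 ≤ r) (h : ∀ z ∈ sphere c r, ‖g c‖ < ‖g z‖) :
    ∃ z ∈ ball c r, g z = 0 := by
  obtain ⟨z, hz, hmin⟩ := exists_isLocalMin_mem_ball hg.continuous.norm.continuousOn
    (mem_closedBall_self hr) h
  refine ⟨z, hz, (eventually_eq_or_eq_zero_of_isLocalMin_norm (.of_forall hg) hmin).resolve_left
    fun hconst => ?_⟩
  -- a locally constant entire function is constant, contradicting the strict inequality
  have hgz := (analyticOnNhd_univ_iff_differentiable.2 hg).eqOn_of_preconnected_of_eventuallyEq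
    analyticOnNhd_const isPreconnected_univ (Set.mem_univ z) hconst
  obtain ⟨w, hw⟩ := (NormedSpace.sphere_nonempty (x := c)).2 hr
  have := h w hw
  rw [hgz (Set.mem_univ c), hgz (Set.mem_univ w)] at this
  exact lt_irrefl _ this

theorem exists_forall_norm_sub_lt_imp_exists_eq_zero {f : ℂ → ℂ} (hf : Continuous f) {c : ℂ}
    (hfc : f c = 0) (hiso : ∀ᶠ z in 𝓝[≠] c, f z ≠ 0) {ε : ℝ} (hε : 0 < ε) :
    ∃ δ > 0, ∀ g : ℂ → ℂ, Differentiable ℂ g → (∀ z ∈ closedBall c ε, ‖g z - f z‖ < δ) →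
      ∃ z ∈ ball c ε, g z = 0 := by
  obtain ⟨ρ, hρ, hfρ⟩ := Metric.eventually_nhds_iff.1 (eventually_nhdsWithin_iff.1 hiso)
  obtain ⟨r, hr, hrρ, hrε⟩ : ∃ r, 0 < r ∧ r < ρ ∧ r < ε :=
    ⟨min ρ ε / 2, by positivity, by linarith [min_le_left ρ ε], by linarith [min_le_right ρ ε]⟩
  obtain ⟨z₀, hz₀, hmin⟩ := (isCompact_sphere c r).exists_isMinOn
    (NormedSpace.sphere_nonempty.2 hr.le) hf.norm.continuousOn
  have hm : 0 < ‖f z₀‖ := by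
    refine norm_pos_iff.2 (hfρ ?_ ?_)
    · rw [mem_sphere.1 hz₀]; exact hrρ
    · exact ne_of_mem_sphere hz₀ hr.ne'
  refine ⟨‖f z₀‖ / 2, half_pos hm, fun g hg hgf => ?_⟩
  have hball : closedBall c r ⊆ closedBall c ε := closedBall_subset_closedBall hrε.le
  obtain ⟨z, hz, hgz⟩ := hg.exists_eq_zero_of_norm_lt_sphere hr.le fun z hz => by
    have hc := hgf c (hball (mem_closedBall_self hr.le))
    have hz' := hgf z (hball (sphere_subset_closedBall hz))
    rw [hfc, sub_zero] at hc
    linarith [isMinOn_iff.1 hmin z hz, norm_sub_norm_le (f z) (g z), norm_sub_rev (f z) (g z)]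
  exact ⟨z, ball_subset_ball hrε.le hz, hgz⟩

theorem irrational_log_div_log {m n : ℕ} (hm : 1 < m) (hn : 1 < n) (hmn : m.Coprime n) :
    Irrational (Real.log m / Real.log n) := by
  rintro ⟨r, hr⟩
  have hlm : 0 < Real.log m := Real.log_pos (by exact_mod_cast hm)
  have hln : 0 < Real.log n := Real.log_pos (by exact_mod_cast hn)
  have hr0 : 0 < r := by
    have : (0 : ℝ) < r := by rw [hr]; positivity
    exact_mod_cast this
  obtain ⟨p, hp⟩ := Int.eq_ofNat_of_zero_le (Rat.num_pos.2 hr0).le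
  have hlog : Real.log ((m : ℝ) ^ r.den) = Real.log ((n : ℝ) ^ p) := by
    rw [Real.log_pow, Real.log_pow, ← div_eq_iff hln.ne', mul_div_assoc, ← hr, Rat.cast_def, hp]
    field_simp
    norm_cast
  have hpow : m ^ r.den = n ^ p := by
    exact_mod_cast Real.log_injOn_pos (Set.mem_Ioi.2 (by positivity))
      (Set.mem_Ioi.2 (by positivity)) hlog
  have : m ^ r.den = 1 := by
    simpa [hpow] using (Nat.Coprime.pow r.den p hmn)
  exact hm.ne' ((pow_eq_one_iff.1 this).resolve_right r.den_nz)

theorem exists_exp_eq_and_norm_exp_sub_lt {ℓ₁ ℓ₂ : ℝ} (h : Irrational (ℓ₂ / ℓ₁)) (θ φ : ℝ)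
    {ε : ℝ} (hε : 0 < ε) :
    ∃ t : ℝ, exp (↑(t * ℓ₁) * I) = exp (θ * I) ∧ ‖exp (↑(t * ℓ₂) * I) - exp (φ * I)‖ < ε := by
  have hℓ₁ : ℓ₁ ≠ 0 := by
    rintro rfl
    simp at h
  set ξ := ℓ₂ / ℓ₁
  have hdense : Dense (AddSubgroup.closure {2 * π * ξ, 2 * π} : Set ℝ) := by
    rw [dense_addSubgroupClosure_pair_iff, mul_div_cancel_left₀ _ (by positivity)]
    exact h
  obtain ⟨y, hy, hyx⟩ := hdense.exists_dist_lt (φ - θ * ξ) hε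
  obtain ⟨n, m, rfl⟩ := AddSubgroup.mem_closure_pair.1 hy
  -- for `t ∈ (θ + 2πℤ) / ℓ₁` the first phase is exact and `t ℓ₂ = θ ξ + 2π n ξ` is dense mod `2π`
  refine ⟨(θ + 2 * π * n) / ℓ₁, ?_, ?_⟩
  · rw [div_mul_cancel₀ _ hℓ₁, exp_eq_exp_iff_exists_int]
    exact ⟨n, by push_cast; ring⟩
  · set d := n • (2 * π * ξ) + m • (2 * π) - (φ - θ * ξ)
    have : exp (↑((θ + 2 * π * n) / ℓ₁ * ℓ₂) * I) = exp (φ * I) * exp (I * d) := by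
      rw [← Complex.exp_add, exp_eq_exp_iff_exists_int]
      refine ⟨-m, ?_⟩
      simp only [d, ξ, zsmul_eq_mul]
      push_cast
      field_simp
      ring
    rw [this, ← mul_sub_one, norm_mul, norm_exp_ofReal_mul_I, one_mul]
    calc ‖exp (I * d) - 1‖ ≤ ‖d‖ := Real.norm_exp_I_mul_ofReal_sub_one_le
      _ < ε := by rwa [Real.norm_eq_abs, ← Real.dist_eq, dist_comm]

theorem ofReal_cpow_add_mul_I {x : ℝ} (hx : 0 < x) (σ t : ℝ) :
    (x : ℂ) ^ (σ + t * I) = ↑(x ^ σ) * exp (↑(t * Real.log x) * I) := by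
  rw [cpow_def_of_ne_zero (ofReal_ne_zero.2 hx.ne'), ← ofReal_log hx.le,
    Real.rpow_def_of_pos hx, ofReal_exp, ← Complex.exp_add]
  push_cast
  ring_nf

theorem exists_cpow_eq_and_norm_cpow_sub_lt {x y : ℝ} (hx : 0 < x) (hy : 0 < y)
    (hxy : Irrational (Real.log y / Real.log x)) {σ : ℝ} {A B : ℂ} (hA : ‖A‖ = x ^ σ)
    (hB : ‖B‖ = y ^ σ) {ε : ℝ} (hε : 0 < ε) :
    ∃ t : ℝ, (x : ℂ) ^ (σ + t * I) = A ∧ ‖(y : ℂ) ^ (σ + t * I) - B‖ < ε := by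
  have hyσ : 0 < y ^ σ := by positivity
  obtain ⟨t, hθ, hφ⟩ := exists_exp_eq_and_norm_exp_sub_lt hxy (arg A) (arg B) (div_pos hε hyσ)
  refine ⟨t, ?_, ?_⟩
  · rw [ofReal_cpow_add_mul_I hx, hθ, ← hA, norm_mul_exp_arg_mul_I]
  · rw [ofReal_cpow_add_mul_I hy, ← norm_mul_exp_arg_mul_I B, hB, ← mul_sub, norm_mul,
      norm_real, Real.norm_of_nonneg hyσ.le]
    exact (lt_div_iff₀' hyσ).1 hφ

theorem exists_norm_eq_and_norm_one_add_add_sq_eq {a c : ℝ} (ha : 1 + a ^ 2 ≤ 4 * a)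
    (hlow : 3 * (a ^ 2 - 1) ^ 2 ≤ 4 * c ^ 2) (hc : 0 ≤ c) (hup : c ≤ 1 + a + a ^ 2) :
    ∃ A : ℂ, ‖A‖ = a ∧ ‖1 + A + A ^ 2‖ = c := by
  have ha0 : 0 < a := by nlinarith
  -- `P u = ‖1 + A + A ^ 2‖ ^ 2` for `A = u + √(a ^ 2 - u ^ 2) i`, minimal at `u = -(1 + a ^ 2) / 4`
  set P : ℝ → ℝ := fun u => (1 + u + 2 * u ^ 2 - a ^ 2) ^ 2 + (a ^ 2 - u ^ 2) * (1 + 2 * u) ^ 2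
  obtain ⟨u, ⟨hu₀u, hua⟩, hPu⟩ : c ^ 2 ∈ P '' Set.Icc (-(1 + a ^ 2) / 4) a := by
    refine intermediate_value_Icc (by linarith) (by fun_prop) ⟨?_, ?_⟩
    · have : P (-(1 + a ^ 2) / 4) = 3 * (a ^ 2 - 1) ^ 2 / 4 := by ring
      linarith
    · have : P a = (1 + a + a ^ 2) ^ 2 := by ring
      rw [this]
      exact pow_le_pow_left₀ hc hup 2
  set v := √(a ^ 2 - u ^ 2)
  have hv : v ^ 2 = a ^ 2 - u ^ 2 := Real.sq_sqrt (by nlinarith)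
  refine ⟨u + v * I, ?_, ?_⟩
  · rw [← sq_eq_sq₀ (norm_nonneg _) ha0.le, Complex.sq_norm, Complex.normSq_add_mul_I]
    linarith
  · rw [← sq_eq_sq₀ (norm_nonneg _) hc, Complex.sq_norm, ← hPu, Complex.normSq_apply]
    simp only [sq, add_re, one_re, ofReal_re, mul_re, I_re, mul_zero, ofReal_im, I_im, mul_one,
      sub_self, add_zero, add_im, mul_im, zero_add, one_im]
    linear_combination (v ^ 2 + a ^ 2 + u ^ 2 + 2 * u - 1) * hv

theorem three_rpow_eleven_div_twenty_le : (3 : ℝ) ^ (11 / 20 : ℝ) ≤ 37 / 20 := by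
  rw [show (11 / 20 : ℝ) = 11 * 20⁻¹ by norm_num, Real.rpow_mul (by norm_num),
    Real.rpow_inv_le_iff_of_pos (by positivity) (by norm_num) (by norm_num)]
  norm_num

theorem three_mul_sq_rpow_sub_one_le {σ : ℝ} (h₁ : -(11 / 20) ≤ σ) (h₂ : σ ≤ 1) :
    3 * (((2 : ℝ) ^ σ) ^ 2 - 1) ^ 2 ≤ 4 * ((3 : ℝ) ^ σ) ^ 2 := by
  set p := (4 / 3 : ℝ) ^ σ
  set q := (1 / 3 : ℝ) ^ σ
  have hp : ((2 : ℝ) ^ σ) ^ 2 = p * 3 ^ σ := by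
    rw [sq, ← Real.mul_rpow, ← Real.mul_rpow] <;> norm_num
  have hq : 1 = q * 3 ^ σ := by
    rw [← Real.mul_rpow] <;> norm_num
  have hp_le : p ≤ 4 / 3 := by
    have := Real.rpow_le_rpow_of_exponent_le (by norm_num : (1 : ℝ) ≤ 4 / 3) h₂
    rwa [Real.rpow_one] at this
  have hp_ge : 3 / 4 ≤ p := by
    have := Real.rpow_le_rpow_of_exponent_le (by norm_num : (1 : ℝ) ≤ 4 / 3)
      (by linarith : (-1 : ℝ) ≤ σ)
    rwa [Real.rpow_neg_one, inv_div] at this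
  have hq_ge : 1 / 3 ≤ q := by
    have := Real.rpow_le_rpow_of_exponent_ge (by norm_num : (0 : ℝ) < 1 / 3) (by norm_num) h₂
    rwa [Real.rpow_one] at this
  have hq_le : q ≤ 37 / 20 := by
    calc q ≤ (1 / 3 : ℝ) ^ (-(11 / 20) : ℝ) :=
          Real.rpow_le_rpow_of_exponent_ge (by norm_num) (by norm_num) h₁
      _ = (3 : ℝ) ^ (11 / 20 : ℝ) := by
          rw [Real.rpow_neg (by norm_num), ← Real.inv_rpow (by norm_num)]
          norm_num
      _ ≤ 37 / 20 := three_rpow_eleven_div_twenty_le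
  rw [hp, hq, ← sub_mul, mul_pow, ← mul_assoc]
  exact mul_le_mul_of_nonneg_right (by nlinarith) (sq_nonneg _)

noncomputable def G4 (s : ℂ) : ℂ := 1 + 2 ^ s + 3 ^ s + 4 ^ s

noncomputable def G4Twist (A B z : ℂ) : ℂ := 1 + A * 2 ^ z + B * 3 ^ z + A ^ 2 * 4 ^ z

theorem four_cpow (s : ℂ) : (4 : ℂ) ^ s = ((2 : ℂ) ^ s) ^ 2 := by
  convert mul_cpow_ofReal_nonneg (a := 2) (b := 2) zero_le_two zero_le_two s using 1 <;>
    norm_num [sq]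

theorem G4_add (s z : ℂ) : G4 (s + z) = G4Twist (2 ^ s) (3 ^ s) z := by
  simp only [G4, G4Twist, four_cpow, cpow_add _ _ two_ne_zero, cpow_add _ _ three_ne_zero]
  ring

theorem G4Twist_zero (A B : ℂ) : G4Twist A B 0 = 1 + A + B + A ^ 2 := by
  simp [G4Twist]

theorem differentiable_G4Twist (A B : ℂ) : Differentiable ℂ (G4Twist A B) := by
  unfold G4Twist
  fun_prop (disch := norm_num)

theorem norm_G4Twist_sub_G4Twist_le {z : ℂ} (hz : z.re ≤ 1) (A B B' : ℂ) :
    ‖G4Twist A B z - G4Twist A B' z‖ ≤ 3 * ‖B - B'‖ := by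
  have h3z : ‖(3 : ℂ) ^ z‖ ≤ 3 := by
    have := norm_cpow_eq_rpow_re_of_pos three_pos z
    push_cast at this
    rw [this]
    simpa using Real.rpow_le_rpow_of_exponent_le (by norm_num : (1 : ℝ) ≤ 3) hz
  have : G4Twist A B z - G4Twist A B' z = (B - B') * 3 ^ z := by
    simp only [G4Twist]
    ring
  rw [this, norm_mul, mul_comm]
  gcongr

theorem G4Twist_neg_three_ne_zero {A B : ℂ} (hA : ‖A‖ ≤ 2) (hB : ‖B‖ ≤ 3) :
    G4Twist A B (-3) ≠ 0 := by
  have h : G4Twist A B (-3) = 1 + (A / 8 + B / 27 + A ^ 2 / 64) := by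
    simp only [G4Twist, cpow_neg, cpow_ofNat]
    ring
  have hsmall : ‖A / 8 + B / 27 + A ^ 2 / 64‖ < 1 := by
    calc ‖A / 8 + B / 27 + A ^ 2 / 64‖ ≤ ‖A‖ / 8 + ‖B‖ / 27 + ‖A‖ ^ 2 / 64 := by
          refine (norm_add₃_le).trans ?_
          simp [norm_pow]
      _ < 1 := by nlinarith [norm_nonneg A]
  rw [h]
  intro h0
  rw [← neg_eq_of_add_eq_zero_right h0, norm_neg, norm_one] at hsmall
  exact lt_irrefl _ hsmall

theorem exists_norm_eq_rpow_and_one_add_add_add_sq_eq_zero {σ : ℝ} (h₁ : -(11 / 20) ≤ σ)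
    (h₂ : σ ≤ 1) : ∃ A B : ℂ, ‖A‖ = (2 : ℝ) ^ σ ∧ ‖B‖ = (3 : ℝ) ^ σ ∧ 1 + A + B + A ^ 2 = 0 := by
  have ha₁ : 1 / 2 ≤ (2 : ℝ) ^ σ := by
    have := Real.rpow_le_rpow_of_exponent_le one_le_two (by linarith : (-1 : ℝ) ≤ σ)
    rwa [Real.rpow_neg_one, ← one_div] at this
  have ha₂ : (2 : ℝ) ^ σ ≤ 2 := by
    simpa using Real.rpow_le_rpow_of_exponent_le one_le_two h₂
  have hup : (3 : ℝ) ^ σ ≤ 1 + 2 ^ σ + ((2 : ℝ) ^ σ) ^ 2 := by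
    rcases le_total σ 0 with hσ | hσ
    · have := Real.rpow_le_one_of_one_le_of_nonpos (by norm_num : (1 : ℝ) ≤ 3) hσ
      nlinarith
    · have : (3 : ℝ) ^ σ ≤ ((2 : ℝ) ^ σ) ^ 2 := by
        rw [sq, ← Real.mul_rpow zero_le_two zero_le_two]
        exact Real.rpow_le_rpow (by norm_num) (by norm_num) hσ
      nlinarith
  obtain ⟨A, hA, hAc⟩ := exists_norm_eq_and_norm_one_add_add_sq_eq (by nlinarith)
    (three_mul_sq_rpow_sub_one_le h₁ h₂) (by positivity) hup
  exact ⟨A, -(1 + A + A ^ 2), hA, by rw [norm_neg, hAc], by ring⟩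

theorem exists_G4_eq_zero_abs_re_sub_lt {σ : ℝ} (h₁ : -(11 / 20) ≤ σ) (h₂ : σ ≤ 1) {ε : ℝ}
    (hε : 0 < ε) : ∃ s : ℂ, G4 s = 0 ∧ |s.re - σ| < ε := by
  obtain ⟨A, B, hA, hB, hAB⟩ := exists_norm_eq_rpow_and_one_add_add_add_sq_eq_zero h₁ h₂
  have hA₂ : ‖A‖ ≤ 2 := by
    simpa [hA] using Real.rpow_le_rpow_of_exponent_le one_le_two h₂
  have hB₃ : ‖B‖ ≤ 3 := by
    simpa [hB] using Real.rpow_le_rpow_of_exponent_le (by norm_num : (1 : ℝ) ≤ 3) h₂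
  have hf := differentiable_G4Twist A B
  obtain ⟨δ, hδ, hzero⟩ := exists_forall_norm_sub_lt_imp_exists_eq_zero hf.continuous
    (by rw [G4Twist_zero, hAB])
    (hf.eventually_ne_zero_nhdsNE (G4Twist_neg_three_ne_zero hA₂ hB₃) 0) (lt_min hε one_pos)
  have hirr : Irrational (Real.log 3 / Real.log 2) := by
    exact_mod_cast irrational_log_div_log (m := 3) (n := 2) (by norm_num) (by norm_num)
      (by norm_num)
  obtain ⟨t, h2t, h3t⟩ := exists_cpow_eq_and_norm_cpow_sub_lt two_pos three_pos hirr hA hB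
    (div_pos hδ three_pos)
  push_cast at h2t h3t
  set s₀ : ℂ := σ + t * I
  have hclose : ∀ z ∈ closedBall 0 (min ε 1),
      ‖G4Twist (2 ^ s₀) (3 ^ s₀) z - G4Twist A B z‖ < δ := by
    intro z hz
    have hz₁ : z.re ≤ 1 :=
      (re_le_norm z).trans ((mem_closedBall_zero_iff.1 hz).trans (min_le_right _ _))
    rw [h2t]
    calc _ ≤ 3 * ‖(3 : ℂ) ^ s₀ - B‖ := norm_G4Twist_sub_G4Twist_le hz₁ _ _ _
      _ < 3 * (δ / 3) := by gcongr
      _ = δ := by ring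
  obtain ⟨z, hz, hgz⟩ := hzero _ (differentiable_G4Twist _ _) hclose
  refine ⟨s₀ + z, by rwa [G4_add], ?_⟩
  have : (s₀ + z).re - σ = z.re := by simp [s₀]
  rw [this]
  calc |z.re| ≤ ‖z‖ := abs_re_le_norm z
    _ < min ε 1 := mem_ball_zero_iff.1 hz
    _ ≤ ε := min_le_left _ _

theorem stmt_11 :
    Set.Icc (-0.55 : ℝ) 1 ⊆
      closure {x : ℝ | ∃ s : ℂ,
        1 + (2 : ℂ) ^ s + (3 : ℂ) ^ s + (4 : ℂ) ^ s = 0 ∧ s.re = x} := by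
  intro σ hσ
  have h₁ : -(11 / 20 : ℝ) ≤ σ := by norm_num at hσ; linarith [hσ.1]
  rw [Metric.mem_closure_iff]
  intro ε hε
  obtain ⟨s, hs, hsσ⟩ := exists_G4_eq_zero_abs_re_sub_lt h₁ hσ.2 hε
  exact ⟨s.re, ⟨s, hs, rfl⟩, by rwa [Real.dist_eq, abs_sub_comm]⟩
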